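/- For every z > 0 and every n ∈ ℕ, the n-th moment of the generalized inverse Gaussian distribution with parameters (1, z², -1/2) satisfies ∫_0^∞ xⁿ g₋(x; z) dx = f_n(z). -/

import Mathlib

/-- The generalized inverse Gaussian density with parameters `(ψ, χ, λ) = (1, z², -1/2)`:
`g₋(x; z) = (z e^z / √(2π)) x^{-3/2} exp(-z²/(2x) - x/2)`. -/
noncomputable def gigMinus (z x : ℝ) : ℝ :=
  z * Real.exp z / Real.sqrt (2 * Real.pi) * x ^ (-(3 : ℝ) / 2) *
    Real.exp (-z ^ 2 / (2 * x) - x / 2)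

/-- The Bessel polynomial `q_n(z) = ∑_{l=0}^n [C(n,l)/C(2n,l)] (2z)^l / l!`. -/
noncomputable def besselQ (n : ℕ) (z : ℝ) : ℝ :=
  ∑ l ∈ Finset.range (n + 1),
    ((n.choose l : ℝ) / ((2 * n).choose l : ℝ)) * (2 * z) ^ l / (Nat.factorial l : ℝ)

/-- The reverse Bessel polynomial `θ_n(z) = ((2n)!/n!) 2^{-n} q_n(z)`. -/
noncomputable def besselTheta (n : ℕ) (z : ℝ) : ℝ :=
  ((Nat.factorial (2 * n) : ℝ) / (Nat.factorial n : ℝ)) * ((2 : ℝ) ^ n)⁻¹ * besselQ n z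

/-- The Carlitz Bessel polynomials: `f₀(z) = 1` and `f_n(z) = z θ_{n-1}(z)` for `n ≥ 1`. -/
noncomputable def besselF (n : ℕ) (z : ℝ) : ℝ :=
  if n = 0 then 1 else z * besselTheta (n - 1) z

/-!
Write `I(α) = ∫₀^∞ x^α exp(-z²/(2x) - x/2) dx` (`gigIntegral z α`), so that the `n`-th moment of
`g₋` is `z e^z I(n - 3/2) / √(2π)`. Integrating the derivative of the integrand over `(0, ∞)` gives
`I(α) = 2α I(α-1) + z² I(α-2)`, i.e. the moments obey the recurrence
`f_{n+2} = (2n+1) f_{n+1} + z² f_n` of the Carlitz polynomials, which in turn comes from a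
three-term identity between the coefficients of the reverse Bessel polynomials. The two initial
values come from two substitutions: `x ↦ z²/x` gives `I(-1/2) = z I(-3/2)`, and `u = √x - z/√x`
turns `I(-1/2) + z I(-3/2)` into the Gaussian integral `2 e^{-z} √(2π)`.
-/

open Real MeasureTheory Set Filter Topology Asymptotics

theorem integral_Ioi_of_hasDerivAt_of_tendsto_nhdsGT {E : Type*} [NormedAddCommGroup E]
    [NormedSpace ℝ E] [CompleteSpace E] {f f' : ℝ → E} {a : ℝ} {l m : E}
    (hderiv : ∀ x ∈ Ioi a, HasDerivAt f (f' x) x) (hint : IntegrableOn f' (Ioi a))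
    (hl : Tendsto f (𝓝[>] a) (𝓝 l)) (hm : Tendsto f atTop (𝓝 m)) :
    ∫ x in Ioi a, f' x = m - l := by
  classical
  rw [← Ici_sdiff_left] at hl
  simpa using integral_Ioi_of_hasDerivAt_of_tendsto (f := Function.update f a l)
    (continuousWithinAt_update_same.mpr hl)
    (fun x hx => (hderiv x hx).congr_of_eventuallyEq <| by
      filter_upwards [eventually_ne_nhds (ne_of_gt hx)] with y hy
      exact Function.update_of_ne hy _ _)
    hint
    (hm.congr' <| by
      filter_upwards [eventually_ne_atTop a] with x hx using (Function.update_of_ne hx _ _).symm)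

theorem rpow_neg_half_eq_inv_sqrt {x : ℝ} (hx : 0 ≤ x) : x ^ (-1 / 2 : ℝ) = (√x)⁻¹ := by
  rw [sqrt_eq_rpow, ← rpow_neg hx]
  norm_num

theorem rpow_neg_three_halves_eq_inv_sqrt_div {x : ℝ} (hx : 0 < x) :
    x ^ (-3 / 2 : ℝ) = (√x)⁻¹ / x := by
  rw [show (-3 / 2 : ℝ) = -1 / 2 - 1 by norm_num, rpow_sub_one hx.ne',
    rpow_neg_half_eq_inv_sqrt hx.le]

theorem hasDerivAt_sqrt_sub_div_sqrt (z : ℝ) {x : ℝ} (hx : 0 < x) :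
    HasDerivAt (fun x => √x - z / √x)
      ((x ^ (-1 / 2 : ℝ) + z * x ^ (-3 / 2 : ℝ)) / 2) x := by
  have hsqrt := hasDerivAt_sqrt hx.ne'
  have hsqrt0 := (sqrt_pos.2 hx).ne'
  refine (hsqrt.sub ((hasDerivAt_const x z).div hsqrt hsqrt0)).congr_deriv ?_
  rw [rpow_neg_half_eq_inv_sqrt hx.le, rpow_neg_three_halves_eq_inv_sqrt_div hx]
  field_simp
  rw [sq_sqrt hx.le]
  ring

theorem strictMonoOn_sqrt_sub_div_sqrt {z : ℝ} (hz : 0 ≤ z) :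
    StrictMonoOn (fun x => √x - z / √x) (Ioi 0) := fun x (hx : 0 < x) _ _ hxy => by
  have hsqrt := sqrt_lt_sqrt hx.le hxy
  have hdiv := div_le_div_of_nonneg_left hz (sqrt_pos.2 hx) hsqrt.le
  simp only
  linarith

theorem image_sqrt_sub_div_sqrt {z : ℝ} (hz : 0 < z) :
    (fun x => √x - z / √x) '' Ioi 0 = univ := by
  refine eq_univ_of_forall fun u => ?_
  obtain ⟨r, hr, hur⟩ : ∃ r, r ^ 2 = u ^ 2 + 4 * z ∧ -u < r :=
    ⟨_, sq_sqrt (by positivity), lt_sqrt_of_sq_lt (by linarith)⟩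
  have hs : 0 < (u + r) / 2 := by linarith
  refine ⟨((u + r) / 2) ^ 2, pow_pos hs 2, ?_⟩
  simp only [sqrt_sq hs.le]
  field_simp [(by linarith : u + r ≠ 0)]
  linear_combination hr

theorem Finset.sum_range_add_two {M : Type*} [AddCommMonoid M] (f : ℕ → M) (n : ℕ) :
    ∑ l ∈ Finset.range (n + 2), f l = ∑ l ∈ Finset.range n, f (l + 2) + f 1 + f 0 := by
  rw [Finset.sum_range_succ', Finset.sum_range_succ']

noncomputable def gigKernel (z α x : ℝ) : ℝ := x ^ α * exp (-z ^ 2 / (2 * x) - x / 2)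

noncomputable def gigIntegral (z α : ℝ) : ℝ := ∫ x in Ioi 0, gigKernel z α x

theorem continuousOn_gigKernel (z α : ℝ) : ContinuousOn (gigKernel z α) (Ioi 0) := by
  intro x (hx : 0 < x)
  apply ContinuousAt.continuousWithinAt
  unfold gigKernel
  fun_prop (disch := simp [hx.ne'])

theorem tendsto_gigKernel_nhdsGT_zero {z : ℝ} (hz : z ≠ 0) (α : ℝ) :
    Tendsto (gigKernel z α) (𝓝[>] 0) (𝓝 0) := by
  have hinv :
      Tendsto (fun x : ℝ => x⁻¹ ^ (-α) * exp (-(z ^ 2 / 2) * x⁻¹)) (𝓝[>] 0) (𝓝 0) :=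
    (tendsto_rpow_mul_exp_neg_mul_atTop_nhds_zero (-α) (z ^ 2 / 2) (by positivity)).comp
      tendsto_inv_nhdsGT_zero
  have hexp : Tendsto (fun x : ℝ => exp (-x / 2)) (𝓝[>] 0) (𝓝 1) := by
    have hc : Continuous fun x : ℝ => exp (-x / 2) := by fun_prop
    simpa using (hc.tendsto 0).mono_left nhdsWithin_le_nhds
  have hprod := hinv.mul hexp
  rw [zero_mul] at hprod
  refine hprod.congr' ?_
  filter_upwards [self_mem_nhdsWithin] with x (hx : 0 < x)
  rw [gigKernel, inv_rpow hx.le, rpow_neg hx.le, inv_inv, mul_assoc, ← exp_add]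
  congr 2
  field_simp
  ring

theorem gigKernel_isBigO_atTop (z α : ℝ) :
    gigKernel z α =O[atTop] fun x => exp (-(1 / 4) * x) := by
  have hbdd : (fun x : ℝ => x ^ α * exp (-(1 / 4) * x)) =O[atTop] fun _ => (1 : ℝ) :=
    (tendsto_rpow_mul_exp_neg_mul_atTop_nhds_zero α (1 / 4) (by norm_num)).isBigO_one ℝ
  refine IsBigO.trans (IsBigO.of_bound 1 ?_)
    ((hbdd.mul (isBigO_refl (fun x => exp (-(1 / 4) * x)) atTop)).congr_right fun _ => one_mul _)
  filter_upwards [eventually_gt_atTop 0] with x hx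
  rw [one_mul, gigKernel, norm_of_nonneg (by positivity), norm_of_nonneg (by positivity),
    mul_assoc, ← exp_add]
  gcongr
  have hpos : 0 ≤ z ^ 2 / (2 * x) := by positivity
  linarith [neg_div (2 * x) (z ^ 2)]

theorem tendsto_gigKernel_atTop (z α : ℝ) : Tendsto (gigKernel z α) atTop (𝓝 0) :=
  (gigKernel_isBigO_atTop z α).trans_tendsto <|
    tendsto_exp_atBot.comp (tendsto_id.const_mul_atTop_of_neg (by norm_num))

theorem integrableOn_gigKernel {z : ℝ} (hz : z ≠ 0) (α : ℝ) :
    IntegrableOn (gigKernel z α) (Ioi 0) := by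
  have hcont := continuousOn_gigKernel z α
  have hmeas : Measurable (gigKernel z α) := by unfold gigKernel; fun_prop
  refine integrableOn_Ioi_iff_integrableAtFilter_atTop_nhdsWithin.mpr
    ⟨?_, ?_, hcont.locallyIntegrableOn measurableSet_Ioi⟩
  · exact (gigKernel_isBigO_atTop z α).integrableAtFilter
      hmeas.stronglyMeasurable.stronglyMeasurableAtFilter
      ⟨Ioi 0, Ioi_mem_atTop 0, exp_neg_integrableOn_Ioi 0 (by norm_num)⟩
  · exact (tendsto_gigKernel_nhdsGT_zero hz α).integrableAtFilter
      hmeas.stronglyMeasurable.stronglyMeasurableAtFilter (volume.finiteAt_nhdsWithin 0 _)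

theorem hasDerivAt_gigKernel (z α : ℝ) {x : ℝ} (hx : 0 < x) :
    HasDerivAt (gigKernel z α) (α * gigKernel z (α - 1) x + z ^ 2 / 2 * gigKernel z (α - 2) x
      - 1 / 2 * gigKernel z α x) x := by
  have harg : HasDerivAt (fun y => -z ^ 2 / (2 * y) - y / 2) (z ^ 2 / (2 * x ^ 2) - 1 / 2) x := by
    refine ((((hasDerivAt_inv hx.ne').const_mul (-z ^ 2 / 2)).sub
      ((hasDerivAt_id x).div_const 2)).congr_deriv (by ring)).congr_of_eventuallyEq
      (Eventually.of_forall fun y => ?_)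
    simp only [Pi.sub_apply, id]
    ring
  refine ((hasDerivAt_rpow_const (p := α) (Or.inl hx.ne')).mul harg.exp).congr_deriv ?_
  simp only [gigKernel, rpow_sub hx, rpow_one, rpow_two]
  field_simp
  ring

theorem gigIntegral_recurrence {z : ℝ} (hz : z ≠ 0) (α : ℝ) :
    gigIntegral z α = 2 * α * gigIntegral z (α - 1) + z ^ 2 * gigIntegral z (α - 2) := by
  have h1 := (integrableOn_gigKernel hz (α - 1)).const_mul α
  have h2 := (integrableOn_gigKernel hz (α - 2)).const_mul (z ^ 2 / 2)
  have h3 := (integrableOn_gigKernel hz α).const_mul (1 / 2)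
  have hftc := integral_Ioi_of_hasDerivAt_of_tendsto_nhdsGT
    (fun x hx => hasDerivAt_gigKernel z α hx) ((h1.add h2).sub h3)
    (tendsto_gigKernel_nhdsGT_zero hz α) (tendsto_gigKernel_atTop z α)
  rw [integral_sub (f := fun x => α * gigKernel z (α - 1) x + z ^ 2 / 2 * gigKernel z (α - 2) x)
    (h1.add h2) h3, integral_add h1 h2, integral_const_mul, integral_const_mul,
    integral_const_mul] at hftc
  simp only [gigIntegral]
  linarith

theorem gigIntegral_eq_rpow_mul_gigIntegral_neg {z : ℝ} (hz : z ≠ 0) (α : ℝ) :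
    gigIntegral z α = (z ^ 2) ^ (α + 1) * gigIntegral z (-α - 2) := by
  have hz2 : 0 < z ^ 2 := by positivity
  have himage : (fun x => z ^ 2 / x) '' Ioi 0 = Ioi 0 := by
    ext y
    refine ⟨fun ⟨x, (hx : 0 < x), hxy⟩ => hxy ▸ div_pos hz2 hx, fun (hy : 0 < y) => ?_⟩
    exact ⟨z ^ 2 / y, div_pos hz2 hy, by field_simp⟩
  have hderiv : ∀ x ∈ Ioi (0 : ℝ),
      HasDerivWithinAt (fun x => z ^ 2 / x) (-z ^ 2 / x ^ 2) (Ioi 0) x := fun x hx =>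
    ((hasDerivAt_inv (ne_of_gt hx)).const_mul (z ^ 2)).hasDerivWithinAt.congr_deriv (by ring)
  have hinj : InjOn (fun x => z ^ 2 / x) (Ioi 0) := fun x _ y _ h =>
    inv_injective (mul_left_cancel₀ hz2.ne' (by simpa only [div_eq_mul_inv] using h))
  rw [gigIntegral, ← himage,
    integral_image_eq_integral_abs_deriv_smul measurableSet_Ioi hderiv hinj, gigIntegral,
    ← integral_const_mul]
  refine setIntegral_congr_fun measurableSet_Ioi fun x (hx : 0 < x) => ?_
  have hexp : -z ^ 2 / (2 * (z ^ 2 / x)) - z ^ 2 / x / 2 = -z ^ 2 / (2 * x) - x / 2 := by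
    field_simp
    ring
  simp only [smul_eq_mul, gigKernel, hexp, abs_div, abs_neg, abs_of_pos hz2, abs_sq,
    div_rpow hz2.le hx.le, rpow_add_one hz2.ne', rpow_sub hx, rpow_neg hx.le, rpow_two]
  field_simp

theorem gigIntegral_neg_half_add {z : ℝ} (hz : 0 < z) :
    gigIntegral z (-1 / 2) + z * gigIntegral z (-3 / 2) = 2 * √(2 * π) * exp (-z) := by
  have hintegrand : ∀ x ∈ Ioi (0 : ℝ),
      |(x ^ (-1 / 2 : ℝ) + z * x ^ (-3 / 2 : ℝ)) / 2| • exp (-(1 / 2) * (√x - z / √x) ^ 2)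
        = exp z / 2 * (gigKernel z (-1 / 2) x + z * gigKernel z (-3 / 2) x) := by
    intro x (hx : 0 < x)
    have hexp : -(1 / 2) * (√x - z / √x) ^ 2 = z + (-z ^ 2 / (2 * x) - x / 2) := by
      have hsqrt0 := (sqrt_pos.2 hx).ne'
      field_simp
      rw [sq_sqrt hx.le]
      ring
    rw [abs_of_pos (by positivity), smul_eq_mul, hexp, exp_add, gigKernel, gigKernel]
    ring
  have hgauss := integral_gaussian (1 / 2)
  rw [← setIntegral_univ, ← image_sqrt_sub_div_sqrt hz,
    integral_image_eq_integral_abs_deriv_smul measurableSet_Ioi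
      (fun x hx => (hasDerivAt_sqrt_sub_div_sqrt z hx).hasDerivWithinAt)
      (strictMonoOn_sqrt_sub_div_sqrt hz.le).injOn,
    setIntegral_congr_fun measurableSet_Ioi hintegrand, integral_const_mul,
    integral_add (integrableOn_gigKernel hz.ne' _) ((integrableOn_gigKernel hz.ne' _).const_mul z),
    integral_const_mul, show π / (1 / 2) = 2 * π by ring] at hgauss
  simp only [gigIntegral]
  rw [exp_neg]
  field_simp
  linarith

theorem gigIntegral_neg_half_eq_mul {z : ℝ} (hz : 0 < z) :
    gigIntegral z (-1 / 2) = z * gigIntegral z (-3 / 2) := by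
  rw [gigIntegral_eq_rpow_mul_gigIntegral_neg hz.ne', show (-1 / 2 : ℝ) + 1 = 1 / 2 by norm_num,
    ← sqrt_eq_rpow, sqrt_sq hz.le]
  norm_num

theorem gigIntegral_neg_three_halves {z : ℝ} (hz : 0 < z) :
    gigIntegral z (-3 / 2) = √(2 * π) * exp (-z) / z := by
  have hsum := gigIntegral_neg_half_add hz
  rw [gigIntegral_neg_half_eq_mul hz] at hsum
  field_simp
  linarith

theorem gigIntegral_neg_half {z : ℝ} (hz : 0 < z) :
    gigIntegral z (-1 / 2) = √(2 * π) * exp (-z) := by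
  rw [gigIntegral_neg_half_eq_mul hz, gigIntegral_neg_three_halves hz]
  field_simp

theorem integral_pow_mul_gigMinus (z : ℝ) (n : ℕ) :
    ∫ x in Ioi 0, x ^ n * gigMinus z x = z * exp z / √(2 * π) * gigIntegral z (n - 3 / 2) := by
  rw [gigIntegral, ← integral_const_mul]
  refine setIntegral_congr_fun measurableSet_Ioi fun x (hx : 0 < x) => ?_
  rw [gigMinus, gigKernel, show (n : ℝ) - 3 / 2 = n + -3 / 2 by ring, rpow_add hx, rpow_natCast]
  ring

open Nat in
noncomputable def besselCoeff (k l : ℕ) : ℝ := (l + 2 * k)! / (k ! * l ! * 2 ^ k)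

theorem besselTheta_eq_sum (m : ℕ) (z : ℝ) :
    besselTheta m z = ∑ l ∈ Finset.range (m + 1), besselCoeff (m - l) l * z ^ l := by
  rw [besselTheta, besselQ, Finset.mul_sum]
  refine Finset.sum_congr rfl fun l hl => ?_
  obtain ⟨k, rfl⟩ := Nat.exists_eq_add_of_le (Nat.lt_succ_iff.mp (Finset.mem_range.mp hl))
  have h1 : ((l + k).choose l : ℝ) * l.factorial * k.factorial = (l + k).factorial := by
    have h := Nat.choose_mul_factorial_mul_factorial (Nat.le_add_right l k)
    rw [Nat.add_sub_cancel_left] at h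
    exact_mod_cast h
  have h2 : ((2 * (l + k)).choose l : ℝ) * l.factorial * (l + 2 * k).factorial
      = (2 * (l + k)).factorial := by
    rw [show l + 2 * k = 2 * (l + k) - l by omega]
    exact_mod_cast Nat.choose_mul_factorial_mul_factorial (by omega)
  rw [besselCoeff, Nat.add_sub_cancel_left, ← h1, ← h2]
  have hc1 : ((l + k).choose l : ℝ) ≠ 0 := by exact_mod_cast (Nat.choose_pos (by omega)).ne'
  have hc2 : ((2 * (l + k)).choose l : ℝ) ≠ 0 := by
    exact_mod_cast (Nat.choose_pos (by omega)).ne'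
  field_simp
  ring

theorem besselCoeff_zero_left (l : ℕ) : besselCoeff 0 l = 1 := by
  simp [besselCoeff, (Nat.factorial_pos l).ne']

theorem besselCoeff_succ_add_two (k l : ℕ) :
    besselCoeff (k + 1) (l + 2)
      = (2 * (k + l : ℝ) + 5) * besselCoeff k (l + 2) + besselCoeff (k + 1) l := by
  simp only [besselCoeff, show l + 2 + 2 * (k + 1) = l + 2 * k + 2 + 1 + 1 by ring,
    show l + 2 + 2 * k = l + 2 * k + 2 by ring, show l + 2 * (k + 1) = l + 2 * k + 2 by ring,
    Nat.factorial_succ]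
  push_cast
  field_simp
  ring

theorem besselCoeff_succ_zero (k : ℕ) :
    besselCoeff (k + 1) 0 = (2 * k + 1) * besselCoeff k 0 := by
  simp only [besselCoeff, show 0 + 2 * (k + 1) = 2 * k + 1 + 1 by ring, zero_add,
    Nat.factorial_succ]
  push_cast
  field_simp
  ring

theorem besselCoeff_succ_one (k : ℕ) :
    besselCoeff (k + 1) 1 = (2 * k + 3) * besselCoeff k 1 := by
  simp only [besselCoeff, show 1 + 2 * (k + 1) = 1 + 2 * k + 1 + 1 by ring, Nat.factorial_succ]
  push_cast
  field_simp
  ring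

theorem besselTheta_add_two (m : ℕ) (z : ℝ) :
    besselTheta (m + 2) z = (2 * m + 3) * besselTheta (m + 1) z + z ^ 2 * besselTheta m z := by
  have hlow : ∀ l ∈ Finset.range m, besselCoeff (m + 2 - (l + 2)) (l + 2) * z ^ (l + 2)
      = (2 * m + 3) * (besselCoeff (m + 1 - (l + 2)) (l + 2) * z ^ (l + 2))
        + z ^ 2 * (besselCoeff (m - l) l * z ^ l) := by
    intro l hl
    obtain ⟨k, rfl⟩ := Nat.exists_eq_add_of_lt (Finset.mem_range.mp hl)
    rw [show l + k + 1 + 2 - (l + 2) = k + 1 by omega, show l + k + 1 + 1 - (l + 2) = k by omega,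
      show l + k + 1 - l = k + 1 by omega, besselCoeff_succ_add_two]
    push_cast
    ring
  rw [besselTheta_eq_sum, besselTheta_eq_sum, besselTheta_eq_sum,
    show m + 2 + 1 = m + 1 + 2 from rfl, Finset.sum_range_add_two, Finset.sum_range_succ _ m,
    Finset.sum_range_add_two, Finset.sum_range_succ _ m, Finset.sum_congr rfl hlow,
    Finset.sum_add_distrib, ← Finset.mul_sum, ← Finset.mul_sum]
  rw [show m + 2 - 1 = m + 1 by omega, Nat.add_sub_cancel, Nat.sub_self, Nat.sub_self,
    Nat.sub_zero, Nat.sub_zero, besselCoeff_succ_one, besselCoeff_succ_zero (m + 1),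
    besselCoeff_zero_left, besselCoeff_zero_left]
  push_cast
  ring

theorem besselTheta_zero (z : ℝ) : besselTheta 0 z = 1 := by
  simp [besselTheta_eq_sum, besselCoeff_zero_left]

theorem besselTheta_one (z : ℝ) : besselTheta 1 z = 1 + z := by
  simp [besselTheta_eq_sum, Finset.sum_range_succ, besselCoeff_zero_left, besselCoeff_succ_zero]

theorem besselF_succ (n : ℕ) (z : ℝ) : besselF (n + 1) z = z * besselTheta n z := by
  simp [besselF]

theorem besselF_add_two (n : ℕ) (z : ℝ) :
    besselF (n + 2) z = (2 * n + 1) * besselF (n + 1) z + z ^ 2 * besselF n z := by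
  cases n with
  | zero =>
    rw [besselF_succ, besselF_succ, besselTheta_one, besselTheta_zero, besselF, if_pos rfl]
    push_cast
    ring
  | succ m =>
    rw [besselF_succ, besselF_succ, besselF_succ, besselTheta_add_two]
    push_cast
    ring

theorem stmt_10 (z : ℝ) (hz : 0 < z) (n : ℕ) :
    ∫ x in Set.Ioi (0 : ℝ), x ^ n * gigMinus z x = besselF n z := by
  rw [integral_pow_mul_gigMinus]
  induction n using Nat.twoStepInduction with
  | zero =>
    rw [besselF, if_pos rfl, Nat.cast_zero, zero_sub, ← neg_div, gigIntegral_neg_three_halves hz,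
      exp_neg]
    field_simp
  | one =>
    rw [besselF_succ, besselTheta_zero, Nat.cast_one, show (1 : ℝ) - 3 / 2 = -1 / 2 by norm_num,
      gigIntegral_neg_half hz, exp_neg]
    field_simp
  | more n ih₀ ih₁ =>
    have hα : ((n + 2 : ℕ) : ℝ) - 3 / 2 = n + 1 / 2 := by push_cast; ring
    rw [besselF_add_two, ← ih₀, ← ih₁, hα, gigIntegral_recurrence hz.ne',
      show (n + 1 / 2 : ℝ) - 1 = ((n + 1 : ℕ) : ℝ) - 3 / 2 by push_cast; ring,
      show (n + 1 / 2 : ℝ) - 2 = (n : ℝ) - 3 / 2 by ring]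
    ring
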